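/- arXiv:1903.12050 — 3 statements merged into one kernel-verified Lean document; each statement's English description precedes it below -/
import Mathlib

section
/- Let X be a hypergeometric random variable with parameters n, k, and m where n - m ≤ k ≤ n and m ≤ n. Then P(X = k - (n - m)) ≤ m/n. -/
/-- For `X ~ Hypergeometric(n,k,m)` with `n - m ≤ k < n` and `m ≤ n`, the probability of
the minimum value, `P(X = k - (n - m)) = C(k, k-(n-m))·C(n-k, m-(k-(n-m)))/C(n,m)`, is
at most `m/n`. -/
theorem stmt_4 (n k m : ℕ) (hmn : m ≤ n) (hnm : n - m ≤ k) (hkn : k < n) :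
    ((k.choose (k - (n - m)) * (n - k).choose (m - (k - (n - m))) : ℕ) : ℝ)
        / (n.choose m : ℝ) ≤ (m : ℝ) / n := by
  have hn0 : 0 < n := lt_of_le_of_lt (Nat.zero_le k) hkn
  have h1 : k.choose (k - (n - m)) = k.choose (n - m) := Nat.choose_symm hnm
  have h2 : m - (k - (n - m)) = n - k := by omega
  have h3 : (n - k).choose (n - k) = 1 := Nat.choose_self _
  -- key identity: n * C(n-1, n-m) = m * C(n, m)
  have hid := Nat.choose_mul_succ_eq (n - 1) (n - m)
  have hn1 : n - 1 + 1 = n := by omega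
  rw [hn1] at hid
  have hsub : n - (n - m) = m := by omega
  rw [hsub, Nat.choose_symm hmn] at hid
  -- hid : (n-1).choose (n-m) * n = n.choose m * m
  have hle : k.choose (n - m) ≤ (n - 1).choose (n - m) :=
    Nat.choose_le_choose _ (by omega)
  have key : k.choose (n - m) * n ≤ m * n.choose m := by
    calc k.choose (n - m) * n ≤ (n - 1).choose (n - m) * n :=
          Nat.mul_le_mul_right _ hle
      _ = n.choose m * m := hid
      _ = m * n.choose m := Nat.mul_comm _ _
  have hcpos : 0 < n.choose m := Nat.choose_pos hmn
  rw [h1, h2, h3, Nat.mul_one]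
  rw [div_le_div_iff₀ (by exact_mod_cast hcpos) (by exact_mod_cast hn0)]
  have : ((k.choose (n - m) * n : ℕ) : ℝ) ≤ ((m * n.choose m : ℕ) : ℝ) := by
    exact_mod_cast key
  push_cast at this ⊢
  linarith
end

section
/- Let X be hypergeometric with parameters n, k, m, where m = (2+ε)(n/k)·log₂ n for ε > 0 (so E[X] = (2+ε)log₂ n). Then P(X ≤ (2+ε/2)log₂ n) ≤ c/log₂ n for some constant c depending only on ε. -/
/-! Writing `w x = k.choose x * (n - k).choose (m - x)`, Vandermonde's identity and the
shift `(x + 1) * k.choose (x + 1) = k * (k - 1).choose x` give the factorial moments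
`n⁽ʲ⁾ ∑ x⁽ʲ⁾ w x = k⁽ʲ⁾ m⁽ʲ⁾ (n.choose m)`. With `μ = mk/n = (2 + ε) log₂ n` the cases
`j = 1, 2` show that the variance `E[X(X-1)] + μ - μ²` is at most `μ`, since
`k(k-1)m(m-1)/(n(n-1)) ≤ μ²`. Chebyshev's inequality at distance `(ε/2) log₂ n` below the
mean then gives the bound with `c = 4(2 + ε)/ε²`. -/

open Finset

theorem Nat.choose_mul_descFactorial {n m j : ℕ} (hj : j ≤ m) :
    n.choose m * m.descFactorial j = n.descFactorial j * (n - j).choose (m - j) := by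
  rw [Nat.descFactorial_eq_factorial_mul_choose, Nat.descFactorial_eq_factorial_mul_choose,
    Nat.mul_left_comm, Nat.choose_mul hj, Nat.mul_assoc]

theorem Nat.sum_descFactorial_mul_choose_mul_choose (a b : ℕ) {s j : ℕ} (hj : j ≤ s) :
    ∑ x ∈ range (s + 1), x.descFactorial j * (a.choose x * b.choose (s - x)) =
      a.descFactorial j * (a + b - j).choose (s - j) := by
  induction j generalizing a s with
  | zero =>
    simp only [Nat.descFactorial_zero, one_mul, Nat.sub_zero]
    rw [Nat.add_choose_eq, Nat.sum_antidiagonal_eq_sum_range_succ_mk]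
  | succ j ih =>
    obtain ⟨s, rfl⟩ : ∃ s', s = s' + 1 := ⟨s - 1, by omega⟩
    rw [sum_range_succ']
    simp only [Nat.zero_descFactorial_succ, zero_mul, add_zero, Nat.succ_descFactorial_succ,
      Nat.add_sub_add_right]
    cases a with
    | zero => simp
    | succ a =>
      have hterm : ∀ y, (y + 1) * y.descFactorial j * ((a + 1).choose (y + 1) * b.choose (s - y))
          = (a + 1) * (y.descFactorial j * (a.choose y * b.choose (s - y))) := fun y => by
        linear_combination
          (y.descFactorial j * b.choose (s - y)) * (Nat.add_one_mul_choose_eq a y).symm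
      rw [sum_congr rfl fun y _ => hterm y, ← mul_sum, ih a (by omega),
        Nat.succ_descFactorial_succ, show a + 1 + b - (j + 1) = a + b - j by omega]
      ring

theorem descFactorial_mul_sum_descFactorial_mul_hypergeom {n k : ℕ} (hkn : k ≤ n) (m j : ℕ) :
    n.descFactorial j *
        ∑ x ∈ range (m + 1), x.descFactorial j * (k.choose x * (n - k).choose (m - x)) =
      k.descFactorial j * m.descFactorial j * n.choose m := by
  by_cases hjm : j ≤ m
  · rw [Nat.sum_descFactorial_mul_choose_mul_choose k (n - k) hjm, Nat.add_sub_cancel' hkn]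
    linear_combination k.descFactorial j * (Nat.choose_mul_descFactorial hjm).symm
  · have hsum :
        ∑ x ∈ range (m + 1), x.descFactorial j * (k.choose x * (n - k).choose (m - x)) = 0 :=
      sum_eq_zero fun x hx => by
        rw [Nat.descFactorial_eq_zero_iff_lt.2 (by simp at hx; omega), zero_mul]
    rw [hsum, Nat.descFactorial_eq_zero_iff_lt.2 (not_le.1 hjm)]
    simp

theorem mul_sub_one_mul_mul_sub_one_mul_le {n k m : ℕ} (hkn : k ≤ n) (hmn : m ≤ n) :
    (k * (k - 1) * (m * (m - 1)) * n : ℝ) ≤ (m * k) ^ 2 * (n - 1) := by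
  rcases Nat.eq_zero_or_pos k with rfl | hk
  · simp
  rcases Nat.eq_zero_or_pos m with rfl | hm
  · simp
  have hk' : (1 : ℝ) ≤ k := by exact_mod_cast hk
  have hm' : (1 : ℝ) ≤ m := by exact_mod_cast hm
  have hkn' : (k : ℝ) ≤ n := by exact_mod_cast hkn
  have hmn' : (m : ℝ) ≤ n := by exact_mod_cast hmn
  have hgap : (0 : ℝ) ≤ (n - k) * m + n * (k - 1) := by
    have := mul_nonneg (sub_nonneg.2 hkn') (by linarith : (0 : ℝ) ≤ m)
    have := mul_nonneg (by linarith : (0 : ℝ) ≤ n) (sub_nonneg.2 hk')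
    linarith
  nlinarith [mul_nonneg (by positivity : (0 : ℝ) ≤ k * m) hgap]

theorem hypergeom_variance_le_mean {n k m : ℕ} (hn : 2 ≤ n) (hkn : k ≤ n) (hmn : m ≤ n) :
    ∑ x ∈ range (m + 1),
        ((x : ℝ) - m * k / n) ^ 2 * ((k.choose x * (n - k).choose (m - x) : ℕ) : ℝ) ≤
      m * k / n * n.choose m := by
  set w : ℕ → ℝ := fun x => ((k.choose x * (n - k).choose (m - x) : ℕ) : ℝ)
  set μ : ℝ := m * k / n
  set C : ℝ := (n.choose m : ℝ)
  have hmoment (j : ℕ) :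
      (n.descFactorial j : ℝ) * ∑ x ∈ range (m + 1), (x.descFactorial j : ℝ) * w x =
        k.descFactorial j * m.descFactorial j * C := by
    simp only [w, C]
    exact_mod_cast descFactorial_mul_sum_descFactorial_mul_hypergeom hkn m j
  have hn' : (2 : ℝ) ≤ n := by exact_mod_cast hn
  have hE0 : ∑ x ∈ range (m + 1), w x = C := by simpa using hmoment 0
  have hE1 : ∑ x ∈ range (m + 1), (x : ℝ) * w x = μ * C := by
    have h := hmoment 1
    simp only [Nat.descFactorial_one] at h
    rw [div_mul_eq_mul_div, eq_div_iff (by positivity)]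
    linarith
  have hE2 : ∑ x ∈ range (m + 1), (x * (x - 1) : ℝ) * w x ≤ μ ^ 2 * C := by
    have h := hmoment 2
    simp only [Nat.cast_descFactorial_two] at h
    have hC : 0 ≤ C := by positivity
    refine le_of_mul_le_mul_left ?_ (by nlinarith : (0 : ℝ) < n ^ 2 * (n - 1))
    calc (n ^ 2 * (n - 1) : ℝ) * ∑ x ∈ range (m + 1), (x * (x - 1) : ℝ) * w x
        = k * (k - 1) * (m * (m - 1)) * n * C := by linear_combination (n : ℝ) * h
      _ ≤ (m * k) ^ 2 * (n - 1) * C :=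
          mul_le_mul_of_nonneg_right (mul_sub_one_mul_mul_sub_one_mul_le hkn hmn) hC
      _ = n ^ 2 * (n - 1) * (μ ^ 2 * C) := by simp only [μ]; field_simp
  calc ∑ x ∈ range (m + 1), ((x : ℝ) - μ) ^ 2 * w x
      = ∑ x ∈ range (m + 1), (x * (x - 1) : ℝ) * w x +
          (1 - 2 * μ) * ∑ x ∈ range (m + 1), (x : ℝ) * w x +
            μ ^ 2 * ∑ x ∈ range (m + 1), w x := by
        simp only [mul_sum, ← sum_add_distrib]
        exact sum_congr rfl fun x _ => by ring
    _ ≤ μ ^ 2 * C + (1 - 2 * μ) * (μ * C) + μ ^ 2 * C := by rw [hE1, hE0]; linarith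
    _ = μ * C := by ring

theorem sq_sub_mul_sum_filter_le_sum_sq_sub_mul {ι : Type*} (s : Finset ι) (f w : ι → ℝ)
    (hw : ∀ x ∈ s, 0 ≤ w x) {a μ : ℝ} (ha : a ≤ μ) :
    (μ - a) ^ 2 * ∑ x ∈ s with f x ≤ a, w x ≤ ∑ x ∈ s, (f x - μ) ^ 2 * w x := by
  rw [mul_sum]
  calc ∑ x ∈ s with f x ≤ a, (μ - a) ^ 2 * w x
      ≤ ∑ x ∈ s with f x ≤ a, (f x - μ) ^ 2 * w x := sum_le_sum fun x hx => by
        rw [mem_filter] at hx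
        have hsq : (μ - a) ^ 2 ≤ (f x - μ) ^ 2 := by nlinarith [hx.2]
        exact mul_le_mul_of_nonneg_right hsq (hw x hx.1)
    _ ≤ ∑ x ∈ s, (f x - μ) ^ 2 * w x :=
        sum_le_sum_of_subset_of_nonneg (filter_subset _ _) fun x hx _ =>
          mul_nonneg (sq_nonneg _) (hw x hx)

/-- Chebyshev bound for the hypergeometric: if `m = (2+ε)(n/k)·log₂ n` then
`P(X ≤ (2+ε/2) log₂ n) ≤ c / log₂ n` for a constant `c` depending only on `ε`. -/
theorem stmt_6 (ε : ℝ) (hε : 0 < ε) :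
    ∃ c : ℝ, ∀ n k m : ℕ, 2 ≤ n → 1 ≤ k → k ≤ n → m ≤ n →
      (m : ℝ) = (2 + ε) * ((n : ℝ) / k) * Real.logb 2 n →
      (∑ x ∈ (Finset.range (m + 1)).filter
          (fun x : ℕ => (x : ℝ) ≤ (2 + ε / 2) * Real.logb 2 n),
        ((k.choose x * (n - k).choose (m - x) : ℕ) : ℝ) / (n.choose m : ℝ))
        ≤ c / Real.logb 2 n := by
  refine ⟨4 * (2 + ε) / ε ^ 2, fun n k m hn hk hkn hmn hm => ?_⟩
  set L := Real.logb 2 n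
  have hL : 1 ≤ L := by
    rw [← Real.logb_self_eq_one one_lt_two]
    exact Real.logb_le_logb_of_le one_lt_two two_pos (by exact_mod_cast hn)
  have hmean : (m : ℝ) * k / n = (2 + ε) * L := by
    have : (k : ℝ) ≠ 0 := by positivity
    rw [hm]; field_simp
  have htail := sq_sub_mul_sum_filter_le_sum_sq_sub_mul (range (m + 1)) (fun x : ℕ => (x : ℝ))
    (fun x => ((k.choose x * (n - k).choose (m - x) : ℕ) : ℝ)) (fun _ _ => Nat.cast_nonneg _)
    (a := (2 + ε / 2) * L) (μ := (m : ℝ) * k / n) (by rw [hmean]; nlinarith)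
  have hvar := hypergeom_variance_le_mean hn hkn hmn
  rw [hmean] at htail hvar
  have hC : (0 : ℝ) < n.choose m := by exact_mod_cast Nat.choose_pos hmn
  rw [← sum_div, div_le_div_iff₀ hC (by linarith), div_mul_eq_mul_div,
    le_div_iff₀ (by positivity)]
  refine le_of_mul_le_mul_right ?_ (by linarith : 0 < L)
  linarith
end

section
/- Let K be a uniformly random k-subset of [n] and let 2q ≤ n. For any estimator K̂ that is a (possibly randomized) function of K ∩ [2q], the probability of exact recovery satisfies P(K̂ = K) = E[1 / C(n − 2q, k − X)], where X = |K ∩ [2q]|. -/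
open Finset

/-!
Conditioned on its trace `S = K ∩ Q`, the uniform `k`-set `K` is uniform on the
`C(n - 2q, k - |S|)` ways of completing `S` outside `Q`, and an estimator that sees only `S`
hits exactly one of them. Hence the number of successful pairs (seed, `K`) is `|R|` times the
number of achievable traces, and the same number of traces is obtained by summing over all
`K` the reciprocal of the size of the fibre containing `K`.
-/

theorem Finset.sum_inv_card_fiber_eq_card_image {α β K : Type*} [DecidableEq β]
    [DivisionSemiring K] [CharZero K] (s : Finset α) (f : α → β) :
    ∑ x ∈ s, ((#{y ∈ s | f y = f x} : ℕ) : K)⁻¹ = #(s.image f) := by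
  rw [← sum_fiberwise_of_maps_to (g := f) (t := s.image f) fun x hx => mem_image_of_mem f hx,
    card_eq_sum_ones, Nat.cast_sum]
  refine sum_congr rfl fun b hb => ?_
  obtain ⟨a, ha, rfl⟩ := mem_image.1 hb
  have hfiber : #{y ∈ s | f y = f a} ≠ 0 := card_ne_zero.2 ⟨a, mem_filter.2 ⟨ha, rfl⟩⟩
  rw [sum_congr rfl fun x hx => by rw [(mem_filter.1 hx).2], sum_const, nsmul_eq_mul,
    mul_inv_cancel₀ (Nat.cast_ne_zero.2 hfiber), Nat.cast_one]

section Traces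

variable {α : Type*} [Fintype α] [DecidableEq α]

theorem Finset.card_sub_card_inter_le_card_compl (K Q : Finset α) : #K - #(K ∩ Q) ≤ #Qᶜ :=
  calc #K - #(K ∩ Q) = #(K \ Q) := by rw [card_sdiff, inter_comm]
    _ ≤ #Qᶜ := card_le_card fun x hx => mem_compl.2 (mem_sdiff.1 hx).2

theorem Finset.card_powersetCard_filter_inter_eq {Q S : Finset α} {k : ℕ} (hSQ : S ⊆ Q)
    (hSk : #S ≤ k) :
    #{K ∈ powersetCard k (univ : Finset α) | K ∩ Q = S} = (#Qᶜ).choose (k - #S) := by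
  rw [← card_powersetCard]
  refine card_nbij' (· \ Q) (S ∪ ·) (fun K hK => ?_) (fun T hT => ?_) (fun K hK => ?_)
    (fun T hT => ?_) <;>
    simp only [mem_coe, mem_filter, mem_powersetCard, subset_univ, true_and] at *
  · refine ⟨fun x hx => mem_compl.2 (mem_sdiff.1 hx).2, ?_⟩
    have := card_inter_add_card_sdiff K Q
    rw [hK.2] at this
    omega
  · have hTQ : Disjoint T Q := disjoint_left.2 fun x hxT => mem_compl.1 (hT.1 hxT)
    refine ⟨?_, ?_⟩
    · rw [card_union_of_disjoint (hTQ.symm.mono_left hSQ), hT.2]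
      omega
    · rw [union_inter_distrib_right, disjoint_iff_inter_eq_empty.1 hTQ, inter_eq_left.2 hSQ,
        union_empty]
  · rw [← hK.2, union_comm, sdiff_union_inter]
  · have hTQ : Disjoint T Q := disjoint_left.2 fun x hxT => mem_compl.1 (hT.1 hxT)
    rw [union_sdiff_distrib, sdiff_eq_empty_iff_subset.2 hSQ, empty_union,
      sdiff_eq_self_iff_disjoint.2 hTQ]

theorem card_estimator_success {R : Type*} [Fintype R] (Q : Finset α) (k : ℕ)
    (Khat : R → Finset α → Finset α)
    (hKhat : ∀ r, ∀ S ∈ (powersetCard k (univ : Finset α)).image (· ∩ Q),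
      Khat r S ∩ Q = S ∧ #(Khat r S) = k) :
    Nat.card {p : R × Finset α // #p.2 = k ∧ Khat p.1 (p.2 ∩ Q) = p.2}
      = Fintype.card R * #((powersetCard k (univ : Finset α)).image (· ∩ Q)) := by
  have htrace : ∀ K : Finset α, #K = k → K ∩ Q ∈ (powersetCard k univ).image (· ∩ Q) :=
    fun K hK => mem_image_of_mem _ (mem_powersetCard.2 ⟨subset_univ K, hK⟩)
  let e : {p : R × Finset α // #p.2 = k ∧ Khat p.1 (p.2 ∩ Q) = p.2}
      ≃ R × (powersetCard k (univ : Finset α)).image (· ∩ Q) :=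
    { toFun p := (p.1.1, ⟨p.1.2 ∩ Q, htrace _ p.2.1⟩)
      invFun x := ⟨(x.1, Khat x.1 x.2), (hKhat x.1 x.2 x.2.2).2, by
        rw [(hKhat x.1 x.2 x.2.2).1]⟩
      left_inv p := Subtype.ext (Prod.ext rfl p.2.2)
      right_inv x := Prod.ext rfl (Subtype.ext (hKhat x.1 x.2 x.2.2).1) }
  rw [Nat.card_congr e, Nat.card_prod, Nat.card_eq_fintype_card, Nat.card_eq_finsetCard]

end Traces

theorem stmt_12_general (n k q : ℕ)
    (Q : Finset (Fin n))
    (hQ : Q = Finset.univ.filter (fun i : Fin n => (i : ℕ) < 2 * q))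
    (R : Type) [Fintype R] [Nonempty R]
    (Khat : R → Finset (Fin n) → Finset (Fin n))
    (hKhat : ∀ r : R, ∀ S ⊆ Q, S.card ≤ k → k - S.card ≤ n - 2 * q →
      Khat r S ∩ Q = S ∧ (Khat r S).card = k) :
    (Nat.card {p : R × Finset (Fin n) //
        p.2.card = k ∧ Khat p.1 (p.2 ∩ Q) = p.2} : ℝ)
        / ((Fintype.card R : ℝ) * (n.choose k : ℝ))
      = (∑ K ∈ Finset.powersetCard k (Finset.univ : Finset (Fin n)),
          (1 : ℝ) / ((n - 2 * q).choose (k - (K ∩ Q).card) : ℝ)) / (n.choose k : ℝ) := by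
  have hQc : #Qᶜ = n - 2 * q := by
    rw [card_compl, Fintype.card_fin, hQ, Fin.card_filter_val_lt]
    omega
  have hcount := card_estimator_success Q k Khat fun r S hS => by
    obtain ⟨K, hK, rfl⟩ := mem_image.1 hS
    have hKk := (mem_powersetCard.1 hK).2
    exact hKhat r _ inter_subset_right (hKk ▸ card_le_card inter_subset_left)
      (hQc ▸ hKk ▸ card_sub_card_inter_le_card_compl K Q)
  have hsum : ∑ K ∈ powersetCard k (univ : Finset (Fin n)),
      (1 : ℝ) / ((n - 2 * q).choose (k - #(K ∩ Q)) : ℝ)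
        = #((powersetCard k (univ : Finset (Fin n))).image (· ∩ Q)) := by
    rw [← sum_inv_card_fiber_eq_card_image]
    refine sum_congr rfl fun K hK => ?_
    have hKk := (mem_powersetCard.1 hK).2
    rw [one_div, card_powersetCard_filter_inter_eq inter_subset_right
      (hKk ▸ card_le_card inter_subset_left), hQc]
  rw [hcount, hsum, Nat.cast_mul, mul_div_mul_left _ _ (Nat.cast_ne_zero.2 Fintype.card_ne_zero)]

/-- Recovery probability identity: let `K` be a uniformly random `k`-subset of `[n]`,
`Q = {1,…,2q}`, and let `K̂` be a (possibly randomized, with seed `r` uniform on a finite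
set `R`) estimator depending only on `K ∩ Q` (which on every achievable value `S` of
`K ∩ Q` outputs a `k`-set whose intersection with `Q` is `S`). Then
`P(K̂ = K) = E[1 / C(n - 2q, k - X)]` where `X = |K ∩ Q|`. -/
theorem stmt_12 (n k q : ℕ) (hq : 2 * q ≤ n) (hk : k ≤ n)
    (Q : Finset (Fin n))
    (hQ : Q = Finset.univ.filter (fun i : Fin n => (i : ℕ) < 2 * q))
    (R : Type) [Fintype R] [Nonempty R]
    (Khat : R → Finset (Fin n) → Finset (Fin n))
    (hKhat : ∀ r : R, ∀ S ⊆ Q, S.card ≤ k → k - S.card ≤ n - 2 * q →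
      Khat r S ∩ Q = S ∧ (Khat r S).card = k) :
    (Nat.card {p : R × Finset (Fin n) //
        p.2.card = k ∧ Khat p.1 (p.2 ∩ Q) = p.2} : ℝ)
        / ((Fintype.card R : ℝ) * (n.choose k : ℝ))
      = (∑ K ∈ Finset.powersetCard k (Finset.univ : Finset (Fin n)),
          (1 : ℝ) / ((n - 2 * q).choose (k - (K ∩ Q).card) : ℝ)) / (n.choose k : ℝ) :=
  stmt_12_general n k q Q hQ R Khat hKhat
end
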